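/- Let Ω be a non-empty, connected, bounded domain in a connected locally finite graph G=(V,E) satisfying the standing assumptions, and let p > 2. Then the Dirichlet problem Δ²u − Δu + u = |u|^{p−2}u in Ω, u = 0 on ∂Ω, has a ground state solution u₀ ∈ H(Ω), i.e. u₀ ∈ N_Ω is a critical point of J_Ω with J_Ω(u₀) = m_Ω = inf_{N_Ω} J_Ω. -/

import Mathlib

/-!
Since `Ω` is finite, `H(Ω)` is the finite-dimensional space of functions on `Ω`, on which
`‖u‖² = hnormSq Ω u` is a positive definite quadratic form and `P(u) = ∫_Ω |u|^p` is positive and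
`p`-homogeneous. The quotient `P(u) / ‖u‖^p` is `0`-homogeneous, so it attains its maximum on the
unit sphere, and a maximiser can be rescaled onto the Nehari set. On the Nehari set
`J = (1/2 - 1/p) ‖u‖²` while the quotient equals `‖u‖^(2-p)`, so the maximiser minimises `J` there;
the first-order condition for the maximum along the lines `u + s φ` is exactly `J'(u) φ = 0`.
-/

open Filter Topology

structure GraphData (V : Type*) where
  ω : V → V → ℝ
  μ : V → ℝ
  sym : ∀ x y, ω x y = ω y x
  nonneg : ∀ x y, 0 ≤ ω x y
  loopless : ∀ x, ω x x = 0
  locfin : ∀ x, {y | ω x y ≠ 0}.Finite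
  μpos : ∀ x, 0 < μ x

variable {V : Type*}

noncomputable def GraphData.lap (g : GraphData V) (u : V → ℝ) (x : V) : ℝ :=
  (1 / g.μ x) * ∑' y, g.ω x y * (u y - u x)

noncomputable def GraphData.grad (g : GraphData V) (u v : V → ℝ) (x : V) : ℝ :=
  (1 / (2 * g.μ x)) * ∑' y, g.ω x y * (u y - u x) * (v y - v x)

noncomputable def GraphData.integral (g : GraphData V) (f : V → ℝ) : ℝ :=
  ∑' x, g.μ x * f x

def GraphData.G (g : GraphData V) : SimpleGraph V where
  Adj x y := 0 < g.ω x y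
  symm := ⟨fun x y h => by show 0 < g.ω y x; rw [g.sym y x]; exact h⟩
  loopless := ⟨fun x h => by simp [g.loopless x] at h⟩

noncomputable def GraphData.enormSq (g : GraphData V) (a : V → ℝ) (lam : ℝ) (u : V → ℝ) : ℝ :=
  ∑' x, g.μ x * ((g.lap u x) ^ 2 + g.grad u u x + (lam * a x + 1) * (u x) ^ 2)

def GraphData.memE (g : GraphData V) (a : V → ℝ) (lam : ℝ) (u : V → ℝ) : Prop :=
  Summable fun x => g.μ x * ((g.lap u x) ^ 2 + g.grad u u x + (lam * a x + 1) * (u x) ^ 2)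

noncomputable def GraphData.lpInt (g : GraphData V) (p : ℝ) (u : V → ℝ) : ℝ :=
  ∑' x, g.μ x * |u x| ^ p

noncomputable def GraphData.Jlam (g : GraphData V) (a : V → ℝ) (lam p : ℝ) (u : V → ℝ) : ℝ :=
  (1 / 2) * g.enormSq a lam u - (1 / p) * g.lpInt p u

def GraphData.Nehari (g : GraphData V) (a : V → ℝ) (lam p : ℝ) : Set (V → ℝ) :=
  {u | u ≠ 0 ∧ g.memE a lam u ∧ g.enormSq a lam u = g.lpInt p u}

noncomputable def GraphData.Jderiv (g : GraphData V) (a : V → ℝ) (lam p : ℝ) (u φ : V → ℝ) : ℝ :=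
  (∑' x, g.μ x * (g.lap u x * g.lap φ x + g.grad u φ x + (lam * a x + 1) * u x * φ x))
    - ∑' x, g.μ x * (|u x| ^ (p - 2) * u x * φ x)

def GraphData.bdry (g : GraphData V) (Ω : Set V) : Set V :=
  {y | y ∉ Ω ∧ ∃ x ∈ Ω, 0 < g.ω x y}

noncomputable def GraphData.hnormSq (g : GraphData V) (Ω : Set V) (u : V → ℝ) : ℝ :=
  (∑' x : ↥(Ω ∪ g.bdry Ω), g.μ x * ((g.lap u x) ^ 2 + g.grad u u x))
    + ∑' x : Ω, g.μ x * (u x) ^ 2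

noncomputable def GraphData.lpIntO (g : GraphData V) (Ω : Set V) (p : ℝ) (u : V → ℝ) : ℝ :=
  ∑' x : Ω, g.μ x * |u x| ^ p

noncomputable def GraphData.JOmega (g : GraphData V) (Ω : Set V) (p : ℝ) (u : V → ℝ) : ℝ :=
  (1 / 2) * g.hnormSq Ω u - (1 / p) * g.lpIntO Ω p u

def GraphData.memH (g : GraphData V) (Ω : Set V) (u : V → ℝ) : Prop :=
  ∀ x ∉ Ω, u x = 0

def GraphData.NehariO (g : GraphData V) (Ω : Set V) (p : ℝ) : Set (V → ℝ) :=
  {u | u ≠ 0 ∧ g.memH Ω u ∧ g.hnormSq Ω u = g.lpIntO Ω p u}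

noncomputable def GraphData.JderivO (g : GraphData V) (Ω : Set V) (p : ℝ) (u φ : V → ℝ) : ℝ :=
  (∑' x : ↥(Ω ∪ g.bdry Ω), g.μ x * (g.lap u x * g.lap φ x + g.grad u φ x))
    + (∑' x : Ω, g.μ x * (u x * φ x))
    - ∑' x : Ω, g.μ x * (|u x| ^ (p - 2) * u x * φ x)

section GroundState

variable {E : Type*} [NormedAddCommGroup E] [NormedSpace ℝ E]

noncomputable def sobolevQuotient (B : LinearMap.BilinForm ℝ E) (P : E → ℝ) (p : ℝ) (u : E) : ℝ :=
  P u / B u u ^ (p / 2)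

variable {B : LinearMap.BilinForm ℝ E} {P : E → ℝ} {p : ℝ}

lemma sobolevQuotient_smul (hP : ∀ c > 0, ∀ u, P (c • u) = c ^ p * P u) {c : ℝ} (hc : 0 < c)
    {u : E} (hu : 0 ≤ B u u) : sobolevQuotient B P p (c • u) = sobolevQuotient B P p u := by
  have hc2 : (c ^ 2) ^ (p / 2) = c ^ p := by
    rw [← Real.rpow_natCast, ← Real.rpow_mul hc.le]; congr 1; push_cast; ring
  simp only [sobolevQuotient, map_smul, LinearMap.smul_apply, smul_eq_mul, hP c hc]
  rw [← mul_assoc, ← sq, Real.mul_rpow (sq_nonneg c) hu, hc2,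
    mul_div_mul_left _ _ (Real.rpow_pos_of_pos hc p).ne']

lemma exists_forall_sobolevQuotient_le [FiniteDimensional ℝ E] [Nontrivial E]
    (hB : ∀ u ≠ 0, 0 < B u u) (hPc : Continuous P) (hP : ∀ c > 0, ∀ u, P (c • u) = c ^ p * P u) :
    ∃ w ≠ 0, ∀ v ≠ 0, sobolevQuotient B P p v ≤ sobolevQuotient B P p w := by
  have hBc : Continuous fun u => B u u :=
    (LinearMap.toContinuousLinearMap.toLinearMap ∘ₗ B).continuous_of_finiteDimensional.clm_apply
      continuous_id
  have hBS : ∀ u ∈ Metric.sphere (0 : E) 1, 0 < B u u := fun u hu =>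
    hB u (ne_zero_of_mem_unit_sphere ⟨u, hu⟩)
  have hq : ContinuousOn (sobolevQuotient B P p) (Metric.sphere 0 1) :=
    hPc.continuousOn.div (hBc.continuousOn.rpow_const fun u hu => Or.inl (hBS u hu).ne')
      fun u hu => (Real.rpow_pos_of_pos (hBS u hu) _).ne'
  obtain ⟨w, hw, hmax⟩ := (isCompact_sphere (0 : E) 1).exists_isMaxOn
    (NormedSpace.sphere_nonempty.mpr zero_le_one) hq
  refine ⟨w, ne_zero_of_mem_unit_sphere ⟨w, hw⟩, fun v hv => ?_⟩
  have hv' : ‖v‖⁻¹ • v ∈ Metric.sphere (0 : E) 1 := by simp [norm_smul, hv]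
  calc sobolevQuotient B P p v = sobolevQuotient B P p (‖v‖⁻¹ • v) :=
        (sobolevQuotient_smul hP (by positivity) (hB v hv).le).symm
    _ ≤ sobolevQuotient B P p w := hmax hv'

lemma exists_pos_smul_nehari (hp : 2 < p) (hP : ∀ c > 0, ∀ u, P (c • u) = c ^ p * P u) {w : E}
    (hBw : 0 < B w w) (hPw : 0 < P w) : ∃ t : ℝ, 0 < t ∧ B (t • w) (t • w) = P (t • w) := by
  set t := (B w w / P w) ^ (p - 2)⁻¹
  have ht : 0 < t := by positivity
  have htp : t ^ p = t ^ 2 * (B w w / P w) := by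
    rw [← Real.rpow_inv_rpow (div_pos hBw hPw).le (by linarith : p - 2 ≠ 0), ← Real.rpow_natCast,
      ← Real.rpow_add ht]
    norm_num
  refine ⟨t, ht, ?_⟩
  simp only [map_smul, LinearMap.smul_apply, smul_eq_mul, hP t ht, htp]
  field_simp

lemma exists_nehari_maximizer [FiniteDimensional ℝ E] [Nontrivial E] (hp : 2 < p)
    (hB : ∀ u ≠ 0, 0 < B u u) (hPc : Continuous P) (hP : ∀ c > 0, ∀ u, P (c • u) = c ^ p * P u)
    (hPpos : ∀ u ≠ 0, 0 < P u) :
    ∃ u ≠ 0, B u u = P u ∧ ∀ v ≠ 0, sobolevQuotient B P p v ≤ sobolevQuotient B P p u := by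
  obtain ⟨w, hw, hmax⟩ := exists_forall_sobolevQuotient_le hB hPc hP
  obtain ⟨t, ht, htw⟩ := exists_pos_smul_nehari hp hP (hB w hw) (hPpos w hw)
  refine ⟨t • w, smul_ne_zero ht.ne' hw, htw, fun v hv => ?_⟩
  rw [sobolevQuotient_smul hP ht (hB w hw).le]
  exact hmax v hv

lemma le_of_sobolevQuotient_le (hp : 2 < p) {u v : E} (hu : 0 < B u u) (hv : 0 < B v v)
    (huN : B u u = P u) (hvN : B v v = P v)
    (h : sobolevQuotient B P p v ≤ sobolevQuotient B P p u) : B u u ≤ B v v := by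
  have hq : ∀ {w : E}, 0 < B w w → B w w = P w → sobolevQuotient B P p w = B w w ^ (1 - p / 2) :=
    fun hw hwN => by rw [sobolevQuotient, ← hwN, Real.rpow_sub hw, Real.rpow_one]
  rw [hq hu huN, hq hv hvN] at h
  exact (Real.rpow_le_rpow_iff_of_neg hv hu (by linarith)).mp h

lemma LinearMap.BilinForm.hasDerivAt_apply_add_smul (B : LinearMap.BilinForm ℝ E) (u φ : E) :
    HasDerivAt (fun s : ℝ => B (u + s • φ) (u + s • φ)) (B u φ + B φ u) 0 := by
  have h : (fun s : ℝ => B (u + s • φ) (u + s • φ))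
      = fun s => B u u + s * (B u φ + B φ u) + s ^ 2 * B φ φ := by
    funext s
    simp only [map_add, map_smul, LinearMap.add_apply, LinearMap.smul_apply, smul_eq_mul]
    ring
  rw [h]
  simpa using (((hasDerivAt_id (0 : ℝ)).mul_const (B u φ + B φ u)).const_add (B u u)).fun_add
    ((hasDerivAt_pow 2 (0 : ℝ)).mul_const (B φ φ))

lemma mul_eq_of_forall_sobolevQuotient_le (hB : ∀ u ≠ 0, 0 < B u u) {u φ : E} (hu : u ≠ 0)
    (hmax : ∀ v ≠ 0, sobolevQuotient B P p v ≤ sobolevQuotient B P p u) {P' : ℝ}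
    (hP' : HasDerivAt (fun s : ℝ => P (u + s • φ)) P' 0) :
    P' * B u u = p / 2 * P u * (B u φ + B φ u) := by
  have hQ := hB u hu
  set f : ℝ → ℝ := fun s =>
    P (u + s • φ) - sobolevQuotient B P p u * B (u + s • φ) (u + s • φ) ^ (p / 2)
  have hlocmax : IsLocalMax f 0 := by
    have hne : ∀ᶠ s : ℝ in 𝓝 0, u + s • φ ≠ 0 :=
      (continuous_const.add (continuous_id.smul continuous_const)).continuousAt.eventually_ne
        (by simpa using hu)
    have hf0 : f 0 = 0 := by
      simp only [f, zero_smul, add_zero, sobolevQuotient,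
        div_mul_cancel₀ _ (Real.rpow_pos_of_pos hQ _).ne', sub_self]
    filter_upwards [hne] with s hs
    have hle := (div_le_iff₀ (Real.rpow_pos_of_pos (hB _ hs) (p / 2))).mp (hmax _ hs)
    rw [hf0]
    exact sub_nonpos.mpr hle
  have hderiv := hP'.fun_sub (((B.hasDerivAt_apply_add_smul u φ).rpow_const
    (p := p / 2) (Or.inl (by simpa using hQ.ne'))).const_mul (sobolevQuotient B P p u))
  simp only [zero_smul, add_zero] at hderiv
  have h0 := hlocmax.hasDerivAt_eq_zero hderiv
  rw [sobolevQuotient, Real.rpow_sub_one hQ.ne'] at h0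
  field_simp at h0
  linear_combination h0 / 2

theorem exists_ground_state [FiniteDimensional ℝ E] [Nontrivial E] (hp : 2 < p)
    (hBs : B.IsSymm) (hB : ∀ u ≠ 0, 0 < B u u) (hPc : Continuous P)
    (hP : ∀ c > 0, ∀ u, P (c • u) = c ^ p * P u) (hPpos : ∀ u ≠ 0, 0 < P u) (N : E → E → ℝ)
    (hN : ∀ u φ, HasDerivAt (fun s : ℝ => P (u + s • φ)) (p * N u φ) 0) :
    ∃ u ≠ 0, B u u = P u ∧
      (∀ v ≠ 0, B v v = P v → 1 / 2 * B u u - 1 / p * P u ≤ 1 / 2 * B v v - 1 / p * P v) ∧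
      ∀ φ, B u φ = N u φ := by
  obtain ⟨u, hu, huN, hmax⟩ := exists_nehari_maximizer hp hB hPc hP hPpos
  have hQ := hB u hu
  refine ⟨u, hu, huN, fun v hv hvN => ?_, fun φ => ?_⟩
  · have hle := le_of_sobolevQuotient_le hp hQ (hB v hv) huN hvN (hmax v hv)
    have hcoef : 0 < 1 / 2 - 1 / p := by
      rw [sub_pos, one_div_lt_one_div (by linarith) two_pos]; exact hp
    rw [← huN, ← hvN]
    nlinarith
  · have h := mul_eq_of_forall_sobolevQuotient_le hB hu hmax (hN u φ)
    rw [hBs.eq φ u, ← huN] at h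
    have hp0 : p ≠ 0 := by linarith
    have : N u φ * (p * B u u) = B u φ * (p * B u u) := by linear_combination h
    exact (mul_right_cancel₀ (mul_ne_zero hp0 hQ.ne') this).symm

end GroundState

section WeightedLp

variable {ι : Type*} [Fintype ι] (w : ι → ℝ) {p : ℝ}

lemma continuous_sum_mul_abs_rpow (hp : 0 ≤ p) :
    Continuous fun v : ι → ℝ => ∑ i, w i * |v i| ^ p :=
  continuous_finsetSum _ fun i _ =>
    continuous_const.mul ((continuous_apply i).abs.rpow_const fun _ => Or.inr hp)

lemma sum_mul_abs_rpow_smul {c : ℝ} (hc : 0 ≤ c) (v : ι → ℝ) :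
    ∑ i, w i * |(c • v) i| ^ p = c ^ p * ∑ i, w i * |v i| ^ p := by
  rw [Finset.mul_sum]
  refine Finset.sum_congr rfl fun i _ => ?_
  rw [Pi.smul_apply, smul_eq_mul, abs_mul, abs_of_nonneg hc, Real.mul_rpow hc (abs_nonneg _)]
  ring

lemma sum_mul_abs_rpow_pos (hw : ∀ i, 0 < w i) {v : ι → ℝ} (hv : v ≠ 0) :
    0 < ∑ i, w i * |v i| ^ p := by
  obtain ⟨i, hi⟩ := Function.ne_iff.mp hv
  exact Finset.sum_pos' (fun j _ => mul_nonneg (hw j).le (by positivity))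
    ⟨i, Finset.mem_univ i, mul_pos (hw i) (Real.rpow_pos_of_pos (abs_pos.mpr hi) p)⟩

lemma hasDerivAt_sum_mul_abs_rpow (hp : 1 < p) (v φ : ι → ℝ) :
    HasDerivAt (fun s : ℝ => ∑ i, w i * |(v + s • φ) i| ^ p)
      (p * ∑ i, w i * (|v i| ^ (p - 2) * v i * φ i)) 0 := by
  simp only [Finset.mul_sum, Pi.add_apply, Pi.smul_apply, smul_eq_mul]
  refine HasDerivAt.fun_sum fun i _ => ?_
  have hline : HasDerivAt (fun s : ℝ => v i + s * φ i) (φ i) 0 := by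
    simpa using ((hasDerivAt_id (0 : ℝ)).mul_const (φ i)).const_add (v i)
  exact (((hasDerivAt_abs_rpow (v i) hp).comp_of_eq 0 hline (by simp)).const_mul (w i)).congr_deriv
    (by ring)

end WeightedLp

namespace SimpleGraph

variable {G : SimpleGraph V}

lemma finite_setOf_exists_walk_length_le (hG : ∀ v, (G.neighborSet v).Finite) (x : V) (n : ℕ) :
    {y | ∃ w : G.Walk y x, w.length ≤ n}.Finite := by
  induction n with
  | zero =>
    refine (Set.finite_singleton x).subset ?_
    rintro y ⟨w, hw⟩
    cases w with
    | nil => rfl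
    | cons _ _ => simp at hw
  | succ n ih =>
    refine ((Set.finite_singleton x).union (ih.biUnion fun z _ => hG z)).subset ?_
    rintro y ⟨w, hw⟩
    cases w with
    | nil => exact Or.inl rfl
    | cons hadj w' =>
      exact Or.inr (Set.mem_biUnion ⟨w', by simpa using hw⟩ hadj.symm)

lemma Connected.finite_setOf_dist_le (hconn : G.Connected) (hG : ∀ v, (G.neighborSet v).Finite)
    (x : V) (n : ℕ) : {y | G.dist x y ≤ n}.Finite := by
  refine (finite_setOf_exists_walk_length_le hG x n).subset fun y hy => ?_
  obtain ⟨w, hw⟩ := hconn.exists_walk_length_eq_dist y x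
  exact ⟨w, by rw [hw, dist_comm]; exact hy⟩

end SimpleGraph

namespace GraphData

variable (g : GraphData V)

lemma neighborSet_finite (x : V) : (g.G.neighborSet x).Finite :=
  (g.locfin x).subset fun _ hy => ne_of_gt hy

lemma finite_of_dist_le (hconn : g.G.Connected) {Ω : Set V}
    (hbd : ∃ D : ℕ, ∀ x ∈ Ω, ∀ y ∈ Ω, g.G.dist x y ≤ D) : Ω.Finite := by
  obtain ⟨D, hD⟩ := hbd
  rcases Ω.eq_empty_or_nonempty with rfl | ⟨x, hx⟩
  · exact Set.finite_empty
  · exact (hconn.finite_setOf_dist_le g.neighborSet_finite x D).subset (hD x hx)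

lemma bdry_finite {Ω : Set V} (hΩ : Ω.Finite) : (g.bdry Ω).Finite :=
  (hΩ.biUnion fun x _ => g.locfin x).subset fun _ ⟨_, _, hx, hxy⟩ =>
    Set.mem_biUnion hx (ne_of_gt hxy)

lemma tsum_ω_mul (x : V) (f : V → ℝ) :
    ∑' y, g.ω x y * f y = ∑ y ∈ (g.locfin x).toFinset, g.ω x y * f y :=
  tsum_eq_sum fun y hy => by simp_all

lemma lap_eq_sum (u : V → ℝ) (x : V) :
    g.lap u x = 1 / g.μ x * ∑ y ∈ (g.locfin x).toFinset, g.ω x y * (u y - u x) := by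
  rw [lap, tsum_ω_mul g x fun y => u y - u x]

lemma grad_eq_sum (u v : V → ℝ) (x : V) :
    g.grad u v x =
      1 / (2 * g.μ x) * ∑ y ∈ (g.locfin x).toFinset, g.ω x y * ((u y - u x) * (v y - v x)) := by
  simp only [grad, mul_assoc, tsum_ω_mul g x fun y => (u y - u x) * (v y - v x)]

lemma lap_add (u v : V → ℝ) (x : V) : g.lap (u + v) x = g.lap u x + g.lap v x := by
  simp only [lap_eq_sum, Pi.add_apply, ← mul_add, ← Finset.sum_add_distrib]
  congr 1; exact Finset.sum_congr rfl fun _ _ => by ring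

lemma lap_smul (c : ℝ) (u : V → ℝ) (x : V) : g.lap (c • u) x = c * g.lap u x := by
  simp only [lap_eq_sum, Pi.smul_apply, smul_eq_mul, Finset.mul_sum]
  exact Finset.sum_congr rfl fun _ _ => by ring

lemma grad_comm (u v : V → ℝ) (x : V) : g.grad u v x = g.grad v u x := by
  simp only [grad_eq_sum, mul_comm (u _ - u x)]

lemma grad_add_left (u₁ u₂ v : V → ℝ) (x : V) :
    g.grad (u₁ + u₂) v x = g.grad u₁ v x + g.grad u₂ v x := by
  simp only [grad_eq_sum, Pi.add_apply, ← mul_add, ← Finset.sum_add_distrib]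
  congr 1; exact Finset.sum_congr rfl fun _ _ => by ring

lemma grad_smul_left (c : ℝ) (u v : V → ℝ) (x : V) : g.grad (c • u) v x = c * g.grad u v x := by
  simp only [grad_eq_sum, Pi.smul_apply, smul_eq_mul, Finset.mul_sum]
  exact Finset.sum_congr rfl fun _ _ => by ring

lemma grad_self_nonneg (u : V → ℝ) (x : V) : 0 ≤ g.grad u u x := by
  rw [grad_eq_sum]
  have := g.μpos x
  exact mul_nonneg (by positivity) (Finset.sum_nonneg fun y _ =>
    mul_nonneg (g.nonneg x y) (mul_self_nonneg _))

end GraphData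

lemma extendByZero_apply_coe {Ω : Set V} (v : Ω → ℝ) (x : Ω) :
    Function.ExtendByZero.linearMap ℝ ((↑) : Ω → V) v x = v x :=
  Subtype.val_injective.extend_apply _ _ _

lemma extendByZero_apply_of_notMem {Ω : Set V} (v : Ω → ℝ) {y : V} (hy : y ∉ Ω) :
    Function.ExtendByZero.linearMap ℝ ((↑) : Ω → V) v y = 0 :=
  Function.extend_apply' _ _ _ (by rintro ⟨x, rfl⟩; exact hy x.2)

namespace GraphData

variable {g : GraphData V} {Ω : Set V}

lemma memH_iff_exists_extendByZero {u : V → ℝ} :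
    g.memH Ω u ↔ ∃ v : Ω → ℝ, Function.ExtendByZero.linearMap ℝ ((↑) : Ω → V) v = u := by
  constructor
  · intro hu
    refine ⟨fun x => u x, funext fun y => ?_⟩
    by_cases hy : y ∈ Ω
    · exact extendByZero_apply_coe _ ⟨y, hy⟩
    · rw [hu y hy]
      exact extendByZero_apply_of_notMem _ hy
  · rintro ⟨v, rfl⟩ y hy
    exact extendByZero_apply_of_notMem v hy

variable (g Ω) [Fintype ↥(Ω ∪ g.bdry Ω)] [Fintype Ω]

noncomputable def hForm : LinearMap.BilinForm ℝ (V → ℝ) :=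
  LinearMap.mk₂ ℝ
    (fun u v => (∑' x : ↥(Ω ∪ g.bdry Ω), g.μ x * (g.lap u x * g.lap v x + g.grad u v x))
      + ∑' x : Ω, g.μ x * (u x * v x))
    (fun u₁ u₂ v => by
      simp only [tsum_fintype, lap_add, grad_add_left, Pi.add_apply, add_mul, mul_add,
        Finset.sum_add_distrib]
      ring)
    (fun c u v => by
      simp only [tsum_fintype, lap_smul, grad_smul_left, Pi.smul_apply, smul_eq_mul, mul_add,
        Finset.mul_sum]
      congr 1 <;> exact Finset.sum_congr rfl fun _ _ => by ring)
    (fun u v₁ v₂ => by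
      simp only [tsum_fintype, g.grad_comm u, lap_add, grad_add_left, Pi.add_apply, mul_add,
        Finset.sum_add_distrib]
      ring)
    (fun c u v => by
      simp only [tsum_fintype, g.grad_comm u, lap_smul, grad_smul_left, Pi.smul_apply,
        smul_eq_mul, mul_add, Finset.mul_sum]
      congr 1 <;> exact Finset.sum_congr rfl fun _ _ => by ring)

variable {g Ω}

lemma hForm_isSymm : (g.hForm Ω).IsSymm :=
  ⟨fun u v => by simp only [hForm, LinearMap.mk₂_apply, g.grad_comm u v, mul_comm (g.lap u _),
    mul_comm (u _)]⟩

lemma hForm_self_pos {u : V → ℝ} (hu : ∃ x ∈ Ω, u x ≠ 0) : 0 < g.hForm Ω u u := by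
  obtain ⟨x, hx, hux⟩ := hu
  refine add_pos_of_nonneg_of_pos (tsum_nonneg fun y => mul_nonneg (g.μpos y).le
    (add_nonneg (mul_self_nonneg _) (g.grad_self_nonneg u y))) ?_
  rw [tsum_fintype]
  exact Finset.sum_pos' (fun y _ => mul_nonneg (g.μpos y).le (mul_self_nonneg _))
    ⟨⟨x, hx⟩, Finset.mem_univ _, mul_pos (g.μpos x) (mul_self_pos.mpr hux)⟩

lemma hnormSq_eq_hForm (u : V → ℝ) : g.hnormSq Ω u = g.hForm Ω u u := by
  simp only [hnormSq, hForm, LinearMap.mk₂_apply, sq]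

lemma JderivO_eq_hForm_sub (p : ℝ) (u φ : V → ℝ) :
    g.JderivO Ω p u φ = g.hForm Ω u φ - ∑' x : Ω, g.μ x * (|u x| ^ (p - 2) * u x * φ x) :=
  rfl

lemma exists_ground_state_of_fintype [Nonempty Ω] {p : ℝ} (hp : 2 < p) :
    ∃ u₀ ∈ g.NehariO Ω p,
      (∀ v ∈ g.NehariO Ω p, g.JOmega Ω p u₀ ≤ g.JOmega Ω p v)
      ∧ ∀ φ, g.memH Ω φ → g.JderivO Ω p u₀ φ = 0 := by
  set ext := Function.ExtendByZero.linearMap ℝ ((↑) : Ω → V)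
  have hext : ∀ (v : Ω → ℝ) (x : Ω), ext v x = v x := extendByZero_apply_coe
  obtain ⟨u, hu0, huN, humin, hucrit⟩ := exists_ground_state (E := Ω → ℝ)
    (B := (g.hForm Ω).compl₁₂ ext ext) (P := fun v => ∑ x : Ω, g.μ x * |v x| ^ p) hp
    ⟨fun v w => hForm_isSymm.eq (ext v) (ext w)⟩
    (fun v hv => by
      obtain ⟨x, hx⟩ := Function.ne_iff.mp hv
      exact hForm_self_pos ⟨x, x.2, by rwa [hext]⟩)
    (continuous_sum_mul_abs_rpow _ (by linarith)) (fun c hc v => sum_mul_abs_rpow_smul _ hc.le v)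
    (fun v hv => sum_mul_abs_rpow_pos (fun x : Ω => g.μ x) (fun x => g.μpos x) hv) _
    (hasDerivAt_sum_mul_abs_rpow _ (by linarith))
  have hlp : ∀ v, g.lpIntO Ω p (ext v) = ∑ x : Ω, g.μ x * |v x| ^ p := fun v => by
    simp only [lpIntO, tsum_fintype, hext]
  have hnehari : ∀ v, g.hnormSq Ω (ext v) = g.lpIntO Ω p (ext v) ↔
      (g.hForm Ω).compl₁₂ ext ext v v = ∑ x : Ω, g.μ x * |v x| ^ p := fun v => by
    rw [hnormSq_eq_hForm, hlp]; rfl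
  refine ⟨ext u, ⟨fun h => hu0 (funext fun x => by simpa [hext] using congrFun h x),
    memH_iff_exists_extendByZero.mpr ⟨u, rfl⟩, (hnehari u).mpr huN⟩, ?_, ?_⟩
  · rintro _ ⟨hv0, hvH, hvN⟩
    obtain ⟨v, rfl⟩ : ∃ v, ext v = _ := memH_iff_exists_extendByZero.mp hvH
    simp only [JOmega, hnormSq_eq_hForm, hlp]
    exact humin v (by rintro rfl; exact hv0 (map_zero ext)) ((hnehari v).mp hvN)
  · intro _ hφ
    obtain ⟨φ, rfl⟩ : ∃ φ, ext φ = _ := memH_iff_exists_extendByZero.mp hφ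
    rw [JderivO_eq_hForm_sub, sub_eq_zero, tsum_fintype]
    simpa only [hext, LinearMap.compl₁₂_apply] using hucrit φ

end GraphData

theorem stmt14_general (g : GraphData V) (p : ℝ) (hconn : g.G.Connected)
    (Ω : Set V) (hne : Ω.Nonempty)
    (hbd : ∃ D : ℕ, ∀ x ∈ Ω, ∀ y ∈ Ω, g.G.dist x y ≤ D)
    (hp : 2 < p) :
    ∃ u₀ ∈ g.NehariO Ω p,
      (∀ v ∈ g.NehariO Ω p, g.JOmega Ω p u₀ ≤ g.JOmega Ω p v)
      ∧ ∀ φ, g.memH Ω φ → g.JderivO Ω p u₀ φ = 0 := by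
  have hΩ : Ω.Finite := g.finite_of_dist_le hconn hbd
  have : Fintype Ω := hΩ.fintype
  have : Fintype ↥(Ω ∪ g.bdry Ω) := (hΩ.union (g.bdry_finite hΩ)).fintype
  have : Nonempty Ω := hne.to_subtype
  exact GraphData.exists_ground_state_of_fintype hp

/-- the Dirichlet problem on the bounded domain Ω has a ground state solution. -/
theorem stmt14 (g : GraphData V) (μmin C p : ℝ) (hμmin : 0 < μmin)
    (hμ : ∀ x, μmin ≤ g.μ x) (hω : ∀ x, ∑' y, g.ω x y ≤ C) (hconn : g.G.Connected)
    (Ω : Set V) (hne : Ω.Nonempty)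
    (hbd : ∃ D : ℕ, ∀ x ∈ Ω, ∀ y ∈ Ω, g.G.dist x y ≤ D)
    (hconnΩ : (g.G.induce Ω).Connected)
    (hp : 2 < p) :
    ∃ u₀ ∈ g.NehariO Ω p,
      (∀ v ∈ g.NehariO Ω p, g.JOmega Ω p u₀ ≤ g.JOmega Ω p v)
      ∧ ∀ φ, g.memH Ω φ → g.JderivO Ω p u₀ φ = 0 :=
  stmt14_general g p hconn Ω hne hbd hp
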